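/- For every n ∈ ℕ and every z ∈ ℂ with Im z > 0: 2·∫_{−2}^{2} U_n(y/2)/(z − y)·ρ_sc(y) dy = 2·((z − √(z²−4))/2)^{n+1}. -/

import Mathlib

/-!
Write `S_k(y) = U_k(y/2)` and let `w = (z - √(z²-4))/2`, the root of `w² - z w + 1 = 0` inside the
unit disc. The generating function `∑ S_k(y) t^k = 1/(1 - y t + t²)` gives
`1/(z - y) = ∑ S_k(y) w^(k+1)` for `y ∈ [-2, 2]`, with terms bounded by `(k+1) |w|^(k+1)`.
Substituting `y = 2 cos θ`, where `S_k(y) sin θ = sin ((k+1) θ)`, shows that the `S_k` are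
orthonormal for the semicircle law, so integrating the series termwise against `S_n ρ_sc` leaves
only `w^(n+1)`.
-/

open MeasureTheory Real Filter Set

noncomputable section

/-- The semicircle density. -/
def rhoSC (x : ℝ) : ℝ :=
  if x ∈ Set.Ioo (-2 : ℝ) 2 then Real.sqrt (4 - x ^ 2) / (2 * Real.pi) else 0

/-- `√(z²−4) := √(z−2)·√(z+2)` with principal square roots (branch cut `[−2,2]`). -/
def sqrtD (z : ℂ) : ℂ := (z - 2) ^ ((1 : ℂ) / 2) * (z + 2) ^ ((1 : ℂ) / 2)

open Polynomial Polynomial.Chebyshev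

theorem abs_sin_natCast_mul_le (k : ℕ) (θ : ℝ) : |sin (k * θ)| ≤ k * |sin θ| := by
  induction k with
  | zero => simp
  | succ k ih =>
    calc |sin ((k + 1 : ℕ) * θ)| = |sin (k * θ) * cos θ + cos (k * θ) * sin θ| := by
          push_cast; rw [add_mul, one_mul, sin_add]
      _ ≤ |sin (k * θ)| + |sin θ| := by
          refine (abs_add_le _ _).trans (add_le_add ?_ ?_) <;> rw [abs_mul]
          · exact mul_le_of_le_one_right (abs_nonneg _) (abs_cos_le_one _)
          · exact mul_le_of_le_one_left (abs_nonneg _) (abs_cos_le_one _)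
      _ ≤ (k + 1 : ℕ) * |sin θ| := by push_cast; linarith

theorem integral_cos_int_mul (m : ℤ) :
    ∫ θ in 0..π, cos (m * θ) = if m = 0 then π else 0 := by
  split_ifs with hm
  · simp [hm]
  · rw [intervalIntegral.integral_comp_mul_left cos (Int.cast_ne_zero.mpr hm)]
    simp [integral_cos]

theorem integral_sin_mul_sin (m n : ℕ) :
    ∫ θ in 0..π, sin ((m + 1) * θ) * sin ((n + 1) * θ) = if m = n then π / 2 else 0 := by
  have h (θ : ℝ) : sin ((m + 1) * θ) * sin ((n + 1) * θ) =
      (cos (((m - n : ℤ) : ℝ) * θ) - cos (((m + n + 2 : ℤ) : ℝ) * θ)) / 2 := by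
    have e₁ : ((m - n : ℤ) : ℝ) * θ = (m + 1) * θ - (n + 1) * θ := by push_cast; ring
    have e₂ : ((m + n + 2 : ℤ) : ℝ) * θ = (m + 1) * θ + (n + 1) * θ := by push_cast; ring
    rw [e₁, e₂, ← two_mul_sin_mul_sin]
    ring
  simp_rw [h]
  rw [intervalIntegral.integral_div, intervalIntegral.integral_sub
    ((by fun_prop : Continuous _).intervalIntegrable _ _)
    ((by fun_prop : Continuous _).intervalIntegrable _ _),
    integral_cos_int_mul, integral_cos_int_mul, if_neg (show ¬(m + n + 2 : ℤ) = 0 by omega)]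
  by_cases hmn : m = n
  · simp [hmn]
  · rw [if_neg (by omega), if_neg hmn]
    simp

theorem summable_natCast_add_one_mul_pow {r : ℝ} (hr : ‖r‖ < 1) :
    Summable (fun k : ℕ => ((k : ℝ) + 1) * r ^ k) := by
  simpa [add_mul] using
    (summable_pow_mul_geometric_of_norm_lt_one 1 hr).add (summable_geometric_of_norm_lt_one hr)

namespace Polynomial.Chebyshev

theorem abs_eval_S_real_le (n : ℕ) {y : ℝ} (hy : |y| ≤ 2) : |(S ℝ n).eval y| ≤ n + 1 := by
  have hIoo : Ioo (-2 : ℝ) 2 ⊆ {y | |(S ℝ n).eval y| ≤ n + 1} := by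
    intro y ⟨hy₁, hy₂⟩
    set θ := arccos (y / 2)
    have hcos : 2 * cos θ = y := by rw [cos_arccos] <;> linarith
    have hsin : 0 < sin θ := by rw [sin_arccos]; apply Real.sqrt_pos.mpr; nlinarith
    have key : |(S ℝ n).eval y| * sin θ ≤ (n + 1) * sin θ := by
      have := abs_sin_natCast_mul_le (n + 1) θ
      rw [← hcos, ← abs_of_pos hsin, ← abs_mul, S_two_mul_real_cos]
      push_cast at this ⊢
      exact this
    exact le_of_mul_le_mul_right key hsin
  have hclosed : IsClosed {y : ℝ | |(S ℝ n).eval y| ≤ n + 1} :=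
    isClosed_le (by fun_prop) continuous_const
  have := closure_minimal hIoo hclosed
  rw [closure_Ioo (by norm_num)] at this
  exact this (abs_le.mp hy)

theorem hasSum_eval_S_real_mul_pow {y : ℝ} (hy : |y| ≤ 2) {t : ℂ} (ht : ‖t‖ < 1) :
    HasSum (fun k : ℕ => (((S ℝ k).eval y : ℝ) : ℂ) * t ^ k) (1 - y * t + t ^ 2)⁻¹ := by
  set u : ℕ → ℂ := fun k => (((S ℝ k).eval y : ℝ) : ℂ)
  have hu₀ : u 0 = 1 := by simp [u]
  have hu₁ : u 1 = y := by simp [u]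
  have hrec (k : ℕ) : u (k + 2) = y * u (k + 1) - u k := by
    simp only [u]
    push_cast
    simp [S_add_two]
  obtain ⟨A, hA⟩ : Summable (fun k => u k * t ^ k) := by
    refine .of_norm_bounded (summable_natCast_add_one_mul_pow (r := ‖t‖) (by simpa using ht))
      fun k => ?_
    rw [norm_mul, norm_pow, Complex.norm_real, norm_eq_abs]
    gcongr
    exact abs_eval_S_real_le k hy
  have hA₁ : HasSum (fun k => u (k + 1) * t ^ (k + 1)) (A - 1) := by
    simpa [hu₀] using (hasSum_nat_add_iff' 1).mpr hA
  have hA₂ : HasSum (fun k => u (k + 2) * t ^ (k + 2)) (A - 1 - y * t) := by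
    simpa [Finset.sum_range_succ, hu₀, hu₁, sub_sub] using (hasSum_nat_add_iff' 2).mpr hA
  have hA₂' : HasSum (fun k => u (k + 2) * t ^ (k + 2)) (y * t * (A - 1) - t ^ 2 * A) := by
    have : (fun k => u (k + 2) * t ^ (k + 2)) =
        fun k => y * t * (u (k + 1) * t ^ (k + 1)) - t ^ 2 * (u k * t ^ k) := by
      funext k
      rw [hrec]
      ring
    rw [this]
    exact (hA₁.mul_left (y * t)).sub (hA.mul_left (t ^ 2))
  have hmul : A * (1 - y * t + t ^ 2) = 1 := by
    linear_combination hA₂.unique hA₂'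
  rwa [← eq_inv_of_mul_eq_one_left hmul]

theorem eval_U_real_div_two (n : ℤ) (y : ℝ) : (U ℝ n).eval (y / 2) = (S ℝ n).eval y := by
  rw [S_eq_U_comp_half_mul_X, eval_comp]
  simp [div_eq_inv_mul]

end Polynomial.Chebyshev

-- `√` vanishes on negative reals, so the case split in `rhoSC` is redundant.
theorem rhoSC_eq (x : ℝ) : rhoSC x = √(4 - x ^ 2) / (2 * π) := by
  rw [rhoSC, ite_eq_left_iff]
  intro hx
  rw [Real.sqrt_eq_zero'.mpr, zero_div]
  rw [mem_Ioo, not_and_or, not_lt, not_lt] at hx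
  rcases hx with hx | hx <;> nlinarith

@[fun_prop]
theorem continuous_rhoSC : Continuous rhoSC := by
  simp_rw [funext rhoSC_eq]
  fun_prop

theorem rhoSC_two_mul_cos {θ : ℝ} (hθ : θ ∈ Icc 0 π) : rhoSC (2 * cos θ) = sin θ / π := by
  have h : 4 - (2 * cos θ) ^ 2 = (2 * sin θ) ^ 2 := by nlinarith [sin_sq_add_cos_sq θ]
  rw [rhoSC_eq, h, Real.sqrt_sq (by nlinarith [sin_nonneg_of_mem_Icc hθ])]
  field_simp

theorem integral_comp_two_mul_cos {g : ℝ → ℝ} (hg : Continuous g) :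
    ∫ y in (-2)..2, g y = ∫ θ in 0..π, g (2 * cos θ) * (2 * sin θ) := by
  have hderiv (θ : ℝ) : HasDerivAt (fun θ => 2 * cos θ) (-(2 * sin θ)) θ := by
    simpa using (hasDerivAt_cos θ).const_mul 2
  have := intervalIntegral.integral_comp_mul_deriv (a := 0) (b := π) (fun θ _ => hderiv θ)
    (by fun_prop) hg
  simp only [Function.comp_def, mul_neg, intervalIntegral.integral_neg, cos_zero, cos_pi,
    mul_one] at this
  rw [intervalIntegral.integral_symm, ← this, neg_neg]

theorem integral_eval_S_real_mul_eval_S_real_mul_rhoSC (m n : ℕ) :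
    ∫ y in Ioo (-2 : ℝ) 2, (S ℝ m).eval y * (S ℝ n).eval y * rhoSC y =
      if m = n then 1 else 0 := by
  rw [← integral_Ioc_eq_integral_Ioo, ← intervalIntegral.integral_of_le (by norm_num),
    integral_comp_two_mul_cos (by fun_prop)]
  have h : ∀ θ ∈ uIcc 0 π, (S ℝ m).eval (2 * cos θ) * (S ℝ n).eval (2 * cos θ) *
      rhoSC (2 * cos θ) * (2 * sin θ) = 2 / π * (sin ((m + 1) * θ) * sin ((n + 1) * θ)) := by
    intro θ hθ
    rw [uIcc_of_le pi_nonneg] at hθ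
    rw [rhoSC_two_mul_cos hθ]
    have hm := S_two_mul_real_cos θ m
    have hn := S_two_mul_real_cos θ n
    push_cast at hm hn
    rw [← hm, ← hn]
    ring
  rw [intervalIntegral.integral_congr h, intervalIntegral.integral_const_mul, integral_sin_mul_sin]
  split_ifs
  · field_simp
  · simp

theorem abs_eval_S_real_mul_eval_S_real_mul_rhoSC_le (m n : ℕ) {y : ℝ} (hy : |y| ≤ 2) :
    |(S ℝ m).eval y * (S ℝ n).eval y * rhoSC y| ≤ (m + 1) * (n + 1) * rhoSC y := by
  have hρ : 0 ≤ rhoSC y := by rw [rhoSC_eq]; positivity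
  rw [abs_mul, abs_mul, abs_of_nonneg hρ]
  gcongr
  exacts [abs_eval_S_real_le m hy, abs_eval_S_real_le n hy]

theorem Complex.re_cpow_one_div_two_pos {x : ℂ} (hx : 0 < x.im) : 0 < (x ^ ((1 : ℂ) / 2)).re := by
  rw [one_div, Complex.cpow_inv_two_re, Real.sqrt_pos]
  linarith [neg_abs_le x.re, Complex.abs_re_lt_norm.mpr hx.ne']

theorem Complex.im_cpow_one_div_two_pos {x : ℂ} (hx : 0 < x.im) : 0 < (x ^ ((1 : ℂ) / 2)).im := by
  rw [one_div, Complex.cpow_inv_two_im_eq_sqrt hx.le, Real.sqrt_pos]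
  linarith [le_abs_self x.re, Complex.abs_re_lt_norm.mpr hx.ne']

theorem sqrtD_sq (z : ℂ) : sqrtD z ^ 2 = z ^ 2 - 4 := by
  simp only [sqrtD, mul_pow, Complex.cpow_ofNat_inv_pow, one_div]
  ring

theorem im_sqrtD_pos {z : ℂ} (hz : 0 < z.im) : 0 < (sqrtD z).im := by
  have h₁ : 0 < (z - 2).im := by simpa using hz
  have h₂ : 0 < (z + 2).im := by simpa using hz
  rw [sqrtD, Complex.mul_im]
  have := Complex.re_cpow_one_div_two_pos h₁
  have := Complex.im_cpow_one_div_two_pos h₁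
  have := Complex.re_cpow_one_div_two_pos h₂
  have := Complex.im_cpow_one_div_two_pos h₂
  positivity

-- `Im (s²) = Im (z²)` forces `Re z` and `Re s` to have the same sign, so `‖z - s‖ < ‖z + s‖`,
-- while `(z - s) (z + s) = 4`.
theorem norm_sub_lt_two_of_sq_eq_sq_sub_four {z s : ℂ} (hz : 0 < z.im) (hs : 0 < s.im)
    (hsq : s ^ 2 = z ^ 2 - 4) : ‖z - s‖ < 2 := by
  have hre : s.re * s.im = z.re * z.im := by
    have := congrArg Complex.im hsq
    simp only [sq, Complex.mul_im, Complex.sub_im] at this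
    norm_num at this
    linarith
  have hzs : 0 < z.im * s.im := mul_pos hz hs
  have hsign : 0 ≤ z.re * s.re := by
    refine nonneg_of_mul_nonneg_left ?_ hzs
    rw [show z.re * s.re * (z.im * s.im) = (s.re * s.im) ^ 2 by
      linear_combination (-(s.re * s.im)) * hre]
    positivity
  have hlt : ‖z - s‖ ^ 2 < ‖z + s‖ ^ 2 := by
    simp only [Complex.sq_norm, Complex.normSq_apply, Complex.sub_re, Complex.sub_im,
      Complex.add_re, Complex.add_im]
    linarith
  have hprod : ‖z - s‖ * ‖z + s‖ = 4 := by
    rw [← norm_mul, show (z - s) * (z + s) = 4 by linear_combination -hsq]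
    norm_num
  nlinarith [norm_nonneg (z - s), norm_nonneg (z + s)]

theorem norm_sub_sqrtD_div_two_lt_one {z : ℂ} (hz : 0 < z.im) : ‖(z - sqrtD z) / 2‖ < 1 := by
  rw [norm_div, Complex.norm_two, div_lt_one two_pos]
  exact norm_sub_lt_two_of_sq_eq_sq_sub_four hz (im_sqrtD_pos hz) (sqrtD_sq z)

theorem hasSum_pow_succ_mul_eval_S_real {z w : ℂ} (hw : ‖w‖ < 1) (hwz : w ^ 2 + 1 = z * w)
    {y : ℝ} (hy : |y| ≤ 2) :
    HasSum (fun k : ℕ => (((S ℝ k).eval y : ℝ) : ℂ) * w ^ (k + 1)) (z - y)⁻¹ := by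
  have hw₀ : w ≠ 0 := by rintro rfl; simp at hwz
  have h := (hasSum_eval_S_real_mul_pow hy hw).mul_left w
  rw [show 1 - y * w + w ^ 2 = w * (z - y) by linear_combination hwz, mul_inv, ← mul_assoc,
    mul_inv_cancel₀ hw₀, one_mul] at h
  simpa only [mul_left_comm w, ← pow_succ'] using h

theorem integral_eval_S_real_mul_rhoSC_div_sub {z w : ℂ} (hw : ‖w‖ < 1)
    (hwz : w ^ 2 + 1 = z * w) (n : ℕ) :
    ∫ y in Ioo (-2 : ℝ) 2, (((S ℝ n).eval y : ℝ) : ℂ) * (rhoSC y : ℂ) / (z - y) = w ^ (n + 1) := by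
  set F : ℕ → ℝ → ℂ := fun k y =>
    (((S ℝ n).eval y * (S ℝ k).eval y * rhoSC y : ℝ) : ℂ) * w ^ (k + 1)
  set bound : ℕ → ℝ → ℝ := fun k y => (n + 1) * ‖w‖ * ((k + 1) * ‖w‖ ^ k) * rhoSC y
  have hlim (y : ℝ) (hy : y ∈ Ioo (-2 : ℝ) 2) :
      HasSum (fun k => F k y) ((((S ℝ n).eval y : ℝ) : ℂ) * (rhoSC y : ℂ) / (z - y)) := by
    have h := (hasSum_pow_succ_mul_eval_S_real hw hwz (abs_le.mpr ⟨hy.1.le, hy.2.le⟩)).mul_left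
      ((((S ℝ n).eval y : ℝ) : ℂ) * (rhoSC y : ℂ))
    have hF : (fun k => F k y) = fun k : ℕ => (((S ℝ n).eval y : ℝ) : ℂ) * (rhoSC y : ℂ) *
        ((((S ℝ k).eval y : ℝ) : ℂ) * w ^ (k + 1)) := by
      funext k
      simp only [F]
      push_cast
      ring
    rwa [hF, div_eq_mul_inv]
  have hbound (k : ℕ) (y : ℝ) (hy : y ∈ Ioo (-2 : ℝ) 2) : ‖F k y‖ ≤ bound k y := by
    rw [norm_mul, norm_pow, Complex.norm_real, norm_eq_abs]
    calc _ ≤ (n + 1) * (k + 1) * rhoSC y * ‖w‖ ^ (k + 1) := by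
          gcongr
          exact abs_eval_S_real_mul_eval_S_real_mul_rhoSC_le n k (abs_le.mpr ⟨hy.1.le, hy.2.le⟩)
      _ = bound k y := by simp only [bound]; ring
  have hsum := hasSum_integral_of_dominated_convergence (μ := volume.restrict (Ioo (-2 : ℝ) 2))
    bound (fun k => (by fun_prop : Continuous (F k)).aestronglyMeasurable)
    (fun k => ae_restrict_of_forall_mem measurableSet_Ioo (hbound k))
    (.of_forall fun _ =>
      ((summable_natCast_add_one_mul_pow (by simpa using hw)).mul_left _).mul_right _)
    (by
      simp_rw [bound, tsum_mul_right]
      exact (continuous_rhoSC.integrableOn_Icc.mono_set Ioo_subset_Icc_self).const_mul _)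
    (ae_restrict_of_forall_mem measurableSet_Ioo hlim)
  have hF (k : ℕ) : ∫ y in Ioo (-2 : ℝ) 2, F k y = if k = n then w ^ (n + 1) else 0 := by
    simp only [F]
    rw [integral_mul_const, integral_complex_ofReal, integral_eval_S_real_mul_eval_S_real_mul_rhoSC]
    by_cases hkn : k = n
    · simp [hkn]
    · simp [hkn, Ne.symm hkn]
  simp_rw [hF] at hsum
  exact hsum.unique (hasSum_ite_eq n _)

/-- Semicircle-weighted Cauchy transform of Chebyshev polynomials of the second kind. -/
theorem chebyshevU_semicircle_transform (n : ℕ) (z : ℂ) (hz : 0 < z.im) :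
    (2 : ℂ) * ∫ y in Set.Ioo (-2 : ℝ) 2,
        ((Polynomial.eval (y / 2) (Polynomial.Chebyshev.U ℝ (n : ℤ)) : ℝ) : ℂ) *
          (rhoSC y : ℂ) / (z - (y : ℂ))
      = 2 * ((z - sqrtD z) / 2) ^ (n + 1) := by
  simp_rw [eval_U_real_div_two]
  rw [integral_eval_S_real_mul_rhoSC_div_sub (norm_sub_sqrtD_div_two_lt_one hz)
    (by linear_combination sqrtD_sq z / 4)]

end
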